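/- Let G=(V,E) be a sparse graph and let G₁=(V₁,E₁) and G₂=(V₂,E₂) be tight subgraphs of G with E₁ ∩ E₂ ≠ ∅ (they have a common edge). Then the union (V₁∪V₂, E₁∪E₂) is a tight subgraph of G. -/

import Mathlib

open scoped Classical

noncomputable section

/-- The squared distance function on `ℂ²`. -/
def sd (x y : ℂ × ℂ) : ℂ := (x.1 - y.1) ^ 2 + (x.2 - y.2) ^ 2

/-- Membership in the transformation group `T`. -/
def IsTransf (t : ℂ × ℂ → ℂ × ℂ) : Prop :=
  ∃ c s u v : ℂ, c ^ 2 + s ^ 2 = 1 ∧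
    ∀ x, t x = (c * x.1 - s * x.2 + u, s * x.1 + c * x.2 + v)

variable {α : Type*} [DecidableEq α]

/-- `(V, E)` is a finite simple undirected graph: edges are non-diagonal
unordered pairs with both endpoints in `V`. -/
def IsGraph (V : Finset α) (E : Finset (Sym2 α)) : Prop :=
  ∀ e ∈ E, ¬ e.IsDiag ∧ ∀ v ∈ e, v ∈ V

/-- `(V', E')` is a subgraph of `(V, E)`. -/
def IsSubgraph (V' : Finset α) (E' : Finset (Sym2 α))
    (V : Finset α) (E : Finset (Sym2 α)) : Prop :=
  IsGraph V' E' ∧ V' ⊆ V ∧ E' ⊆ E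

/-- A graph is sparse if every subgraph `(V', E')` with `|V'| ≥ 2`
satisfies `|E'| ≤ 2|V'| - 3`. -/
def IsSparse (V : Finset α) (E : Finset (Sym2 α)) : Prop :=
  IsGraph V E ∧ ∀ V' E', IsSubgraph V' E' V E → 2 ≤ V'.card →
    (E'.card : ℤ) ≤ 2 * V'.card - 3

/-- A graph is tight if it is sparse and `|V| = 1` or `|E| = 2|V| - 3`. -/
def IsTight (V : Finset α) (E : Finset (Sym2 α)) : Prop :=
  IsSparse V E ∧ (V.card = 1 ∨ (E.card : ℤ) = 2 * V.card - 3)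

/-- `(V', E')` is a max-tight subgraph of `(V, E)`. -/
def IsMaxTight (V' : Finset α) (E' : Finset (Sym2 α))
    (V : Finset α) (E : Finset (Sym2 α)) : Prop :=
  IsSubgraph V' E' V E ∧ IsTight V' E' ∧
    ∀ V'' E'', IsSubgraph V'' E'' V E → IsTight V'' E'' →
      V' ⊆ V'' → E' ⊆ E'' → V' = V'' ∧ E' = E''

/-- `{(Vi i, Ei i)}_{i ∈ I}` is a max-tight decomposition of `(V, E)`. -/
def IsMaxTightDecomp {I : Type*} (V : Finset α) (E : Finset (Sym2 α))
    (Vi : I → Finset α) (Ei : I → Finset (Sym2 α)) : Prop :=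
  (∀ i, IsMaxTight (Vi i) (Ei i) V E) ∧
  (∀ v ∈ V, ∃ i, v ∈ Vi i) ∧
  (∀ e ∈ E, ∃ i, e ∈ Ei i) ∧
  (∀ i j, i ≠ j → ∀ e, ¬ (e ∈ Ei i ∧ e ∈ Ei j))

/-- Extend a realization of `V` to all of `α` (by zero off `V`). -/
def extendR (V : Finset α) (r : ↥V → ℂ × ℂ) : α → ℂ × ℂ :=
  fun a => if h : a ∈ V then r ⟨a, h⟩ else 0

/-- The squared distance along an unordered pair of vertices. -/
def edgeVal (r : α → ℂ × ℂ) : Sym2 α → ℂ :=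
  Sym2.lift ⟨fun u v => sd (r u) (r v), fun u v => by simp only [sd]; ring⟩

/-- The edge map `E_G : (ℂ²)^V → ℂ^E`. -/
def edgeMap (V : Finset α) (E : Finset (Sym2 α)) (r : ↥V → ℂ × ℂ) :
    {e // e ∈ E} → ℂ :=
  fun e => edgeVal (extendR V r) e.1

/-- The set `E_G⁻¹(λ)` of `λ`-compatible realizations. -/
def fiber (V : Finset α) (E : Finset (Sym2 α)) (lam : {e // e ∈ E} → ℂ) :
    Set (↥V → ℂ × ℂ) :=
  {r | edgeMap V E r = lam}

/-- The set of equivalence classes of `S` under `r ∼ s ↔ ∃ t ∈ T, s = t ∘ r`. -/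
def TClasses {β : Type*} (S : Set (β → ℂ × ℂ)) : Set (Set (β → ℂ × ℂ)) :=
  {C | ∃ r ∈ S, C = {s | s ∈ S ∧ ∃ t, IsTransf t ∧ s = fun v => t (r v)}}

/-- The coordinates of a realization, as a point of affine space with
coordinate ring `ℂ[x_v, y_v : v ∈ β]`. -/
def coords {β : Type*} (r : β → ℂ × ℂ) : β × Fin 2 → ℂ :=
  fun p => if p.2 = 0 then (r p.1).1 else (r p.1).2

/-- The vanishing ideal of a set of realizations in `ℂ[x_v, y_v : v ∈ β]`. -/
def vanishingIdeal {β : Type*} (S : Set (β → ℂ × ℂ)) :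
    Ideal (MvPolynomial (β × Fin 2) ℂ) where
  carrier := {f | ∀ r ∈ S, MvPolynomial.eval (coords r) f = 0}
  add_mem' := by
    intro a b ha hb r hr
    simp only [Set.mem_setOf_eq] at ha hb ⊢
    simp [map_add, ha r hr, hb r hr]
  zero_mem' := by intro r hr; simp
  smul_mem' := by
    intro c f hf r hr
    simp only [Set.mem_setOf_eq] at hf ⊢
    simp [smul_eq_mul, map_mul, hf r hr]

end

/-! Every subgraph of a sparse graph is sparse, so only the count `|E₁ ∪ E₂| = 2|V₁ ∪ V₂| - 3`
needs proof. The common edge gives `|V₁ ∩ V₂| ≥ 2`, so sparsity of `G` bounds the intersection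
by `|E₁ ∩ E₂| ≤ 2|V₁ ∩ V₂| - 3`; inclusion–exclusion on vertices and edges then gives
`|E₁ ∪ E₂| ≥ 2|V₁ ∪ V₂| - 3`, and sparsity of `G` gives the reverse inequality. -/

section Sparsity

variable {α : Type*} {V V' V₁ V₂ : Finset α} {E E' E₁ E₂ : Finset (Sym2 α)}

theorem IsGraph.two_le_card_of_mem (h : IsGraph V E) {e : Sym2 α} (he : e ∈ E) :
    2 ≤ V.card := by
  obtain ⟨hdiag, hV⟩ := h e he
  induction e using Sym2.ind with
  | _ u v =>
    have huv : u ≠ v := by simpa [Sym2.mk_isDiag_iff] using hdiag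
    exact Finset.one_lt_card_iff.mpr
      ⟨u, v, hV u (Sym2.mem_mk_left u v), hV v (Sym2.mem_mk_right u v), huv⟩

theorem IsSubgraph.trans {V'' : Finset α} {E'' : Finset (Sym2 α)}
    (h : IsSubgraph V'' E'' V' E') (h' : IsSubgraph V' E' V E) : IsSubgraph V'' E'' V E :=
  ⟨h.1, h.2.1.trans h'.2.1, h.2.2.trans h'.2.2⟩

theorem IsSparse.of_isSubgraph (hS : IsSparse V E) (h : IsSubgraph V' E' V E) :
    IsSparse V' E' :=
  ⟨h.1, fun _ _ h' => hS.2 _ _ (h'.trans h)⟩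

theorem IsTight.card_edges_eq (hT : IsTight V E) (hV : 2 ≤ V.card) :
    (E.card : ℤ) = 2 * V.card - 3 :=
  hT.2.resolve_left (by omega)

variable [DecidableEq α]

theorem IsGraph.union (h₁ : IsGraph V₁ E₁) (h₂ : IsGraph V₂ E₂) :
    IsGraph (V₁ ∪ V₂) (E₁ ∪ E₂) := by
  intro e he
  rcases Finset.mem_union.mp he with he | he
  · exact ⟨(h₁ e he).1, fun v hv => Finset.mem_union_left _ ((h₁ e he).2 v hv)⟩
  · exact ⟨(h₂ e he).1, fun v hv => Finset.mem_union_right _ ((h₂ e he).2 v hv)⟩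

theorem IsGraph.inter (h₁ : IsGraph V₁ E₁) (h₂ : IsGraph V₂ E₂) :
    IsGraph (V₁ ∩ V₂) (E₁ ∩ E₂) := by
  intro e he
  rw [Finset.mem_inter] at he
  exact ⟨(h₁ e he.1).1,
    fun v hv => Finset.mem_inter.mpr ⟨(h₁ e he.1).2 v hv, (h₂ e he.2).2 v hv⟩⟩

theorem IsSubgraph.union (h₁ : IsSubgraph V₁ E₁ V E) (h₂ : IsSubgraph V₂ E₂ V E) :
    IsSubgraph (V₁ ∪ V₂) (E₁ ∪ E₂) V E :=
  ⟨h₁.1.union h₂.1, Finset.union_subset h₁.2.1 h₂.2.1, Finset.union_subset h₁.2.2 h₂.2.2⟩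

theorem IsSubgraph.inter (h₁ : IsSubgraph V₁ E₁ V E) (h₂ : IsSubgraph V₂ E₂ V E) :
    IsSubgraph (V₁ ∩ V₂) (E₁ ∩ E₂) V E :=
  ⟨h₁.1.inter h₂.1, Finset.inter_subset_left.trans h₁.2.1,
    Finset.inter_subset_left.trans h₁.2.2⟩

theorem IsSparse.card_union_edges_eq (hS : IsSparse V E)
    (h₁ : IsSubgraph V₁ E₁ V E) (h₂ : IsSubgraph V₂ E₂ V E)
    (hE₁ : (E₁.card : ℤ) = 2 * V₁.card - 3) (hE₂ : (E₂.card : ℤ) = 2 * V₂.card - 3)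
    (hI : 2 ≤ (V₁ ∩ V₂).card) :
    ((E₁ ∪ E₂).card : ℤ) = 2 * (V₁ ∪ V₂).card - 3 := by
  have hU : 2 ≤ (V₁ ∪ V₂).card :=
    hI.trans (Finset.card_le_card (Finset.inter_subset_left.trans Finset.subset_union_left))
  have hIbound := hS.2 _ _ (h₁.inter h₂) hI
  have hUbound := hS.2 _ _ (h₁.union h₂) hU
  have hVcard : ((V₁ ∪ V₂).card : ℤ) + (V₁ ∩ V₂).card = V₁.card + V₂.card := by
    exact_mod_cast Finset.card_union_add_card_inter V₁ V₂
  have hEcard : ((E₁ ∪ E₂).card : ℤ) + (E₁ ∩ E₂).card = E₁.card + E₂.card := by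
    exact_mod_cast Finset.card_union_add_card_inter E₁ E₂
  linarith

end Sparsity

/-- In a sparse graph, the union of two tight subgraphs with a
common edge is again a tight subgraph. -/
theorem union_of_tight_subgraphs_with_common_edge_is_tight
    {α : Type*} [DecidableEq α]
    (V : Finset α) (E : Finset (Sym2 α))
    (V1 V2 : Finset α) (E1 E2 : Finset (Sym2 α))
    (hSparse : IsSparse V E)
    (h1 : IsSubgraph V1 E1 V E) (h2 : IsSubgraph V2 E2 V E)
    (ht1 : IsTight V1 E1) (ht2 : IsTight V2 E2)
    (hcommon : (E1 ∩ E2).Nonempty) :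
    IsSubgraph (V1 ∪ V2) (E1 ∪ E2) V E ∧ IsTight (V1 ∪ V2) (E1 ∪ E2) := by
  obtain ⟨e, he⟩ := hcommon
  have hI : 2 ≤ (V1 ∩ V2).card := (h1.inter h2).1.two_le_card_of_mem he
  have hV1 : 2 ≤ V1.card := hI.trans (Finset.card_le_card Finset.inter_subset_left)
  have hV2 : 2 ≤ V2.card := hI.trans (Finset.card_le_card Finset.inter_subset_right)
  have hU := h1.union h2
  refine ⟨hU, hSparse.of_isSubgraph hU, Or.inr ?_⟩
  exact hSparse.card_union_edges_eq h1 h2 (ht1.card_edges_eq hV1) (ht2.card_edges_eq hV2) hI
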